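/- (Independence of all passed vectors per node) In a linear (k,α) MSR exact-regenerating code with k ≥ α + 1 and β = 1, for any non-systematic node m, any α of the k vectors v^{(m,1)},…,v^{(m,k)} passed by node m for regeneration of the k systematic nodes are linearly independent in F_q^{kα}. -/

import Mathlib

/-!
Replacing systematic node `p` by a non-systematic node `n` in the reconstruction property gives a
block-triangular matrix, so every `α × α` column block of `n`'s matrix is invertible. The repair
equations for a systematic node `l` with helper set `D`, read on the columns of block `l`, make the
vectors passed by the helpers a basis of `F^α`; read on the columns of a block `p ≠ l`, they force
interference alignment: block `p` of `v^{(n,l)}` is a nonzero multiple of `x_{p,l}`.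

Choose a systematic node `p₀ ∉ T`, possible as `k > α`. If `x_{p₀,l₀}` were in the span of the
`x_{p₀,l}`, `l ∈ T \ {l₀}`, alignment at `p₀` would transport this to `x_{n,l₀}` for every
helper `n`, and alignment at `l₀` would put the `α` independent vectors passed for repairing `l₀`
into the span of the `α - 1` vectors `x_{l₀,l}`. Hence the `x_{p₀,l}`, `l ∈ T`, are independent,
and so are the `v^{(m,l)}`, whose blocks `p₀` are nonzero multiples of them.
-/

open Matrix Submodule

theorem Matrix.isUnit_det_toSquareBlockProp {m R : Type*} [Fintype m] [DecidableEq m]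
    [CommRing R] {M : Matrix m m R} (p : m → Prop) [DecidablePred p]
    (h : ∀ i, ¬p i → ∀ j, p j → M i j = 0) (hM : IsUnit M.det) :
    IsUnit (M.toSquareBlockProp p).det := by
  rw [twoBlockTriangular_det M p h] at hM
  exact isUnit_of_mul_isUnit_left hM

theorem mem_span_image_of_map_eq_units_smul {F ι V W : Type*} [Field F] [AddCommGroup V]
    [Module F V] [AddCommGroup W] [Module F W] {φ : V →ₗ[F] W} (hφ : Function.Injective φ)
    {u : ι → V} {a : ι → W} {s : Set ι} {i : ι}
    (h : ∀ j ∈ insert i s, ∃ μ : Fˣ, φ (u j) = μ • a j) (ha : a i ∈ span F (a '' s)) :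
    u i ∈ span F (u '' s) := by
  rw [← comap_map_eq_of_injective hφ (span F (u '' s)), mem_comap, map_span]
  obtain ⟨μ, hμ⟩ := h i (Set.mem_insert i s)
  have hspan : span F (a '' s) ≤ span F (φ '' (u '' s)) := by
    refine span_le.mpr ?_
    rintro _ ⟨j, hj, rfl⟩
    obtain ⟨ν, hν⟩ := h j (Set.mem_insert_of_mem i hj)
    rw [← inv_smul_smul ν (a j), ← hν]
    exact Submodule.smul_of_tower_mem _ _ (subset_span ⟨u j, ⟨j, hj, rfl⟩, rfl⟩)
  rw [hμ]
  exact Submodule.smul_of_tower_mem _ _ (hspan ha)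

def colBlock {m ι κ R : Type*} (A : Matrix m (ι × κ) R) (p : ι) : Matrix m κ R :=
  A.submatrix id (Prod.mk p)

theorem vecMul_colBlock {m ι κ R : Type*} [Fintype m] [NonUnitalNonAssocSemiring R]
    (v : m → R) (A : Matrix m (ι × κ) R) (p : ι) (j : κ) :
    (v ᵥ* colBlock A p) j = (v ᵥ* A) (p, j) := rfl

section

variable {F : Type*} [Field F] {k α s : ℕ}

section Code

variable (G : Fin k ⊕ Fin s → Matrix (Fin α) (Fin k × Fin α) F)
  (x : Fin k ⊕ Fin s → Fin k → Fin α → F)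

def IsSystematic : Prop :=
  ∀ (m : Fin k) (i : Fin α) (q : Fin k × Fin α),
    G (Sum.inl m) i q = if q.1 = m ∧ q.2 = i then 1 else 0

def IsMDS : Prop :=
  ∀ f : Fin k → Fin k ⊕ Fin s, Function.Injective f →
    IsUnit (Matrix.det (Matrix.of fun p q : Fin k × Fin α => G (f p.1) p.2 q))

/-- Node `n` helps repair systematic node `l` by passing `x n l ᵥ* G n`, the paper's `v^{(n,l)}`;
`Y` recovers node `l` from what the other systematic nodes and the helpers in `D` pass. -/
def IsRepairedBy (l : Fin k) (D : Finset (Fin s)) (Y : Fin α → Fin k ⊕ Fin s → F) : Prop :=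
  ∀ (i : Fin α) (q : Fin k × Fin α),
    G (Sum.inl l) i q =
      (∑ m : Fin k, if m ≠ l then
          Y i (Sum.inl m) * ∑ j, x (Sum.inl m) l j * G (Sum.inl m) j q else 0)
        + ∑ m ∈ D, Y i (Sum.inr m) * ∑ j, x (Sum.inr m) l j * G (Sum.inr m) j q

def HasExactRepair : Prop :=
  ∀ (l : Fin k) (D : Finset (Fin s)), D.card = α → ∃ Y, IsRepairedBy G x l D Y

end Code

variable {G : Fin k ⊕ Fin s → Matrix (Fin α) (Fin k × Fin α) F}
  {x : Fin k ⊕ Fin s → Fin k → Fin α → F}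

theorem IsSystematic.vecMul_eq (hsys : IsSystematic G) (m : Fin k) (v : Fin α → F) :
    v ᵥ* G (.inl m) = fun q => if q.1 = m then v q.2 else 0 := by
  ext q
  by_cases hq : q.1 = m <;> simp [Matrix.vecMul, dotProduct, hsys m _ q, hq]

theorem isUnit_det_colBlock (hsys : IsSystematic G) (hmds : IsMDS G) (n : Fin s) (p : Fin k) :
    IsUnit (colBlock (G (.inr n)) p).det := by
  classical
  set f : Fin k → Fin k ⊕ Fin s := fun p' => if p' = p then .inr n else .inl p'
  have hf : Function.Injective f := by
    intro a b hab
    by_cases ha : a = p <;> by_cases hb : b = p <;> simp_all [f]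
  set A := Matrix.of fun p q : Fin k × Fin α => G (f p.1) p.2 q
  have hA := isUnit_det_toSquareBlockProp (M := A) (fun q => q.1 = p)
    (by rintro ⟨p', i⟩ hp' ⟨_, j⟩ rfl; simp_all [A, f, hsys p' i, eq_comm]) (hmds f hf)
  let e : Fin α ≃ {q : Fin k × Fin α // q.1 = p} :=
    { toFun := fun j => ⟨(p, j), rfl⟩
      invFun := fun q => q.1.2
      left_inv := fun _ => rfl
      right_inv := fun ⟨(_, _), h⟩ => by subst h; rfl }
  convert hA using 1
  rw [← det_submatrix_equiv_self e]
  congr 1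
  ext i j
  simp [colBlock, A, f, e, toSquareBlockProp, toBlock]

section Repair

variable {l : Fin k} {D : Finset (Fin s)} {Y : Fin α → Fin k ⊕ Fin s → F}

theorem IsRepairedBy.mul_colBlock (hsys : IsSystematic G) (hY : IsRepairedBy G x l D Y)
    (p : Fin k) :
    (of fun i (n : D) => Y i (.inr n)) *
        (of fun n : D => x (.inr n) l ᵥ* colBlock (G (.inr n)) p) =
      if p = l then 1 else -vecMulVec (fun i => Y i (.inl p)) (x (.inl p) l) := by
  ext i j
  have h := hY i (p, j)
  have hvecMul : ∀ (v : Fin α → F) (M : Matrix (Fin α) (Fin k × Fin α) F) q,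
      ∑ j, v j * M j q = (v ᵥ* M) q := fun _ _ _ => rfl
  simp only [hvecMul, hsys.vecMul_eq, hsys l i] at h
  have hsys_sum : (∑ m : Fin k, if m ≠ l then
      Y i (.inl m) * (if p = m then x (.inl m) l j else 0) else 0) =
        if p = l then 0 else Y i (.inl p) * x (.inl p) l j := by
    rw [Finset.sum_eq_single p (fun m _ hm => by simp [Ne.symm hm]) (by simp)]
    split_ifs <;> simp_all
  rw [hsys_sum, ← Finset.sum_coe_sort D] at h
  simp only [mul_apply, of_apply, vecMul_colBlock]
  by_cases hpl : p = l
  · subst hpl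
    simp only [true_and, if_true, zero_add] at h
    rw [if_pos rfl, one_apply, ← h]
    simp only [eq_comm]
  · simp only [hpl, false_and, if_false] at h
    rw [if_neg hpl, Matrix.neg_apply, vecMulVec_apply]
    linear_combination -h

theorem IsRepairedBy.colBlock_mul (hsys : IsSystematic G) (hY : IsRepairedBy G x l D Y)
    (hD : D.card = α) :
    (of fun n : D => x (.inr n) l ᵥ* colBlock (G (.inr n)) l) *
      (of fun i (n : D) => Y i (.inr n)) = 1 :=
  (mul_eq_one_comm_of_equiv (D.equivFinOfCardEq hD).symm).mp
    (by simpa using hY.mul_colBlock hsys l)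

theorem IsRepairedBy.linearIndependent (hsys : IsSystematic G) (hY : IsRepairedBy G x l D Y)
    (hD : D.card = α) :
    LinearIndependent F fun n : D => x (.inr n) l ᵥ* colBlock (G (.inr n)) l := by
  refine (vecMul_injective_iff (M := of fun n : D => x (.inr n) l ᵥ* colBlock (G (.inr n)) l)).mp
    fun v w hvw => ?_
  have := congrArg (· ᵥ* of fun i (n : D) => Y i (.inr n)) hvw
  simpa only [vecMul_vecMul, hY.colBlock_mul hsys hD, vecMul_one] using this

theorem IsRepairedBy.mem_span_singleton (hsys : IsSystematic G) (hY : IsRepairedBy G x l D Y)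
    (hD : D.card = α) {p : Fin k} (hpl : p ≠ l) (n : D) :
    x (.inr n) l ᵥ* colBlock (G (.inr n)) p ∈ F ∙ x (.inl p) l := by
  set C := fun p => of fun n : D => x (.inr n) l ᵥ* colBlock (G (.inr n)) p
  have hC : C p = -vecMulVec (C l *ᵥ fun i => Y i (.inl p)) (x (.inl p) l) := by
    rw [← Matrix.one_mul (C p), ← hY.colBlock_mul hsys hD, Matrix.mul_assoc,
      hY.mul_colBlock hsys p, if_neg hpl, Matrix.mul_neg, mul_vecMulVec]
  rw [Submodule.mem_span_singleton]
  refine ⟨-(C l *ᵥ fun i => Y i (.inl p)) n, ?_⟩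
  ext j
  simpa [C, vecMulVec_apply] using (congrFun (congrFun hC n) j).symm

end Repair

theorem injective_vecMulLinear_colBlock (hsys : IsSystematic G) (hmds : IsMDS G) (n : Fin s)
    (p : Fin k) : Function.Injective (vecMulLinear (colBlock (G (.inr n)) p)) := by
  rw [coe_vecMulLinear]
  exact vecMul_injective_of_isUnit
    ((isUnit_iff_isUnit_det _).mpr (isUnit_det_colBlock hsys hmds n p))

theorem exists_vecMul_colBlock_eq_units_smul (hα : 0 < α) (hs : α ≤ s) (hsys : IsSystematic G)
    (hmds : IsMDS G) (hrep : HasExactRepair G x) (n : Fin s) {l p : Fin k} (hpl : p ≠ l) :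
    ∃ μ : Fˣ, x (.inr n) l ᵥ* colBlock (G (.inr n)) p = μ • x (.inl p) l := by
  obtain ⟨D, hnD, -, hD⟩ := Finset.exists_subsuperset_card_eq (n := α) (Finset.subset_univ {n})
    (by rw [Finset.card_singleton]; exact hα) (by simpa using hs)
  have hn : n ∈ D := hnD (Finset.mem_singleton_self n)
  obtain ⟨Y, hY⟩ := hrep l D hD
  obtain ⟨μ, hμ⟩ := mem_span_singleton.mp (hY.mem_span_singleton hsys hD hpl ⟨n, hn⟩)
  have hx : x (.inr n) l ≠ 0 := fun h0 =>
    (hY.linearIndependent hsys hD).ne_zero ⟨n, hn⟩ (by simp [h0])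
  have hμ0 : μ ≠ 0 := by
    rintro rfl
    refine hx (injective_vecMulLinear_colBlock hsys hmds n p ?_)
    simpa [eq_comm] using hμ
  exact ⟨Units.mk0 μ hμ0, hμ.symm⟩

theorem le_finrank_of_forall_vecMul_colBlock_mem (hs : α ≤ s) (hsys : IsSystematic G)
    (hrep : HasExactRepair G x) {l : Fin k} {W : Submodule F (Fin α → F)}
    (hW : ∀ n : Fin s, x (.inr n) l ᵥ* colBlock (G (.inr n)) l ∈ W) :
    α ≤ Module.finrank F W := by
  obtain ⟨D, -, hD⟩ := Finset.exists_subset_card_eq (s := (Finset.univ : Finset (Fin s)))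
    (n := α) (by simpa using hs)
  obtain ⟨Y, hY⟩ := hrep l D hD
  calc α = Module.finrank F (span F (Set.range fun n : D =>
        x (.inr n) l ᵥ* colBlock (G (.inr n)) l)) := by
        rw [finrank_span_eq_card (hY.linearIndependent hsys hD), Fintype.card_coe, hD]
    _ ≤ Module.finrank F W :=
        Submodule.finrank_mono (span_le.mpr (Set.range_subset_iff.mpr fun n => hW n))

theorem linearIndepOn_systematic_coeff (hs : α ≤ s) (hsys : IsSystematic G) (hmds : IsMDS G)
    (hrep : HasExactRepair G x) {p₀ : Fin k} {T : Finset (Fin k)} (hp₀ : p₀ ∉ T)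
    (hT : T.card = α) : LinearIndepOn F (x (.inl p₀)) T := by
  classical
  rw [linearIndepOn_iff_notMem_span]
  intro l₀ hl₀ hspan
  have hα : 0 < α := hT ▸ Finset.card_pos.mpr ⟨l₀, hl₀⟩
  set T' := (T : Set (Fin k)) \ {l₀}
  have hT'T : insert l₀ T' = T := by simp [T', hl₀]
  have hdep : ∀ n : Fin s, x (.inr n) l₀ ∈ span F (x (.inr n) '' T') := fun n =>
    mem_span_image_of_map_eq_units_smul (injective_vecMulLinear_colBlock hsys hmds n p₀)
      (fun l hl => exists_vecMul_colBlock_eq_units_smul hα hs hsys hmds hrep n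
        (ne_of_mem_of_not_mem (show l ∈ (T : Set (Fin k)) from hT'T ▸ hl) hp₀).symm) hspan
  set W := span F (((T.erase l₀).image (x (.inl l₀)) : Finset (Fin α → F)) : Set (Fin α → F))
  have hW : ∀ n : Fin s, x (.inr n) l₀ ᵥ* colBlock (G (.inr n)) l₀ ∈ W := by
    intro n
    have := mem_map_of_mem (f := vecMulLinear (colBlock (G (.inr n)) l₀)) (hdep n)
    rw [map_span] at this
    refine span_le.mpr ?_ this
    rintro _ ⟨_, ⟨l, hl, rfl⟩, rfl⟩
    obtain ⟨μ, hμ⟩ := exists_vecMul_colBlock_eq_units_smul hα hs hsys hmds hrep n (Ne.symm hl.2)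
    rw [vecMulLinear_apply, hμ]
    exact smul_of_tower_mem _ _ (subset_span (Finset.mem_coe.mpr
      (Finset.mem_image_of_mem _ (Finset.mem_erase.mpr ⟨hl.2, hl.1⟩))))
  have hfin : Module.finrank F W ≤ α - 1 :=
    calc Module.finrank F W ≤ ((T.erase l₀).image (x (.inl l₀))).card :=
          finrank_span_finset_le_card _
      _ ≤ (T.erase l₀).card := Finset.card_image_le
      _ = α - 1 := by rw [Finset.card_erase_of_mem hl₀, hT]
  have := le_finrank_of_forall_vecMul_colBlock_mem hs hsys hrep hW
  omega

end

/-- For `k ≥ α + 1`, in a linear `(k,α)` MSR exact-regenerating code (same setting as the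
canonical-form lemma), any `α` of the `k` vectors `v^{(m,1)},…,v^{(m,k)}` passed by a
non-systematic node `m` for regeneration of the `k` systematic nodes are linearly
independent in `F^{kα}`. -/
theorem statement14 {F : Type*} [Field F] {k α s : ℕ}
    (hk : α + 1 ≤ k) (hs : α ≤ s)
    (G : (Fin k ⊕ Fin s) → Matrix (Fin α) (Fin k × Fin α) F)
    (x : (Fin k ⊕ Fin s) → Fin k → Fin α → F)
    (hsys : ∀ (m : Fin k) (i : Fin α) (q : Fin k × Fin α),
      G (Sum.inl m) i q = if q.1 = m ∧ q.2 = i then 1 else 0)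
    (hrecon : ∀ f : Fin k → (Fin k ⊕ Fin s), Function.Injective f →
      IsUnit (Matrix.det (Matrix.of fun p q : Fin k × Fin α => G (f p.1) p.2 q)))
    (hrepair : ∀ (l : Fin k) (D : Finset (Fin s)), D.card = α →
      ∃ Y : Fin α → (Fin k ⊕ Fin s) → F, ∀ (i : Fin α) (q : Fin k × Fin α),
        G (Sum.inl l) i q =
          (∑ m : Fin k, if m ≠ l then
              Y i (Sum.inl m) * ∑ j, x (Sum.inl m) l j * G (Sum.inl m) j q else 0)
            + ∑ m ∈ D, Y i (Sum.inr m) * ∑ j, x (Sum.inr m) l j * G (Sum.inr m) j q) :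
    ∀ (m : Fin s) (T : Finset (Fin k)), T.card = α →
      LinearIndependent F (fun l : T => fun q : Fin k × Fin α =>
        ∑ j, x (Sum.inr m) l j * G (Sum.inr m) j q) := by
  intro m T hT
  obtain ⟨p₀, -, hp₀⟩ := Finset.exists_mem_notMem_of_card_lt_card
    (s := T) (t := Finset.univ) (by simpa [hT] using hk)
  choose μ hμ using fun l : T =>
    exists_vecMul_colBlock_eq_units_smul (hT ▸ Finset.card_pos.mpr ⟨l, l.2⟩) hs hsys hrecon
      hrepair m (ne_of_mem_of_not_mem l.2 hp₀).symm
  have hcoeff : LinearIndependent F fun l : T => x (.inl p₀) l :=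
    linearIndepOn_systematic_coeff hs hsys hrecon hrepair hp₀ hT
  refine LinearIndependent.of_comp (LinearMap.funLeft F F (Prod.mk p₀)) ?_
  convert hcoeff.units_smul μ using 1
  funext l
  exact hμ l
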